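/- arXiv:1706.05882 — 5 statements merged into one kernel-verified Lean document; each statement's English description precedes it below -/
import Mathlib

section
/- Let u : ℝ³ × ℝ → ℝ³, p : ℝ³ × ℝ → ℝ and T : ℝ³ × ℝ → ℝ be smooth, and suppose u satisfies the dissipative Oberbeck–Boussinesq momentum equation ∂ₜu + (u·∇)u = −∇p + ν Δu + α g T e₃ for constants α, g, ν ∈ ℝ, where e₃ = (0,0,1) and Δ is the componentwise Laplacian. Let c₀ : ℝ → ℝ³ be a smooth closed loop with c₀(s+1) = c₀(s) for all s, and let c(t,s) satisfy c(0,s) = c₀(s) and ∂ₜc(t,s) = u(c(t,s), t) for all t, s. Then the circulation I(t) = ∫₀¹ u(c(t,s), t) · ∂ₛc(t,s) ds satisfies I′(t) = ∫₀¹ (α g T(c(t,s), t) e₃ + ν Δu(c(t,s), t)) · ∂ₛc(t,s) ds. -/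
open Set MeasureTheory Filter

namespace KelvinAux

variable {E F : Type*} [NormedAddCommGroup E] [NormedSpace ℝ E]
  [NormedAddCommGroup F] [NormedSpace ℝ F]

lemma hasDerivAt_comp_pair {f : E × ℝ → F} {r : ℝ → E} {r' : E} {t : ℝ}
    (hf : DifferentiableAt ℝ f (r t, t)) (hr : HasDerivAt r r' t) :
    HasDerivAt (fun τ => f (r τ, τ)) (fderiv ℝ f (r t, t) (r', 1)) t := by
  have h : HasDerivAt (fun τ => (r τ, τ)) (r', 1) t := hr.prodMk (hasDerivAt_id t)
  simpa [Function.comp_def] using hf.hasFDerivAt.comp_hasDerivAt_of_eq t h rfl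

lemma hasDerivAt_comp_snd {f : E × ℝ → F} {x : E} {t : ℝ}
    (hf : DifferentiableAt ℝ f (x, t)) :
    HasDerivAt (fun τ => f (x, τ)) (fderiv ℝ f (x, t) (0, 1)) t := by
  have h : HasDerivAt (fun τ => (x, τ)) ((0 : E), (1 : ℝ)) t :=
    (hasDerivAt_const t x).prodMk (hasDerivAt_id t)
  simpa [Function.comp_def] using hf.hasFDerivAt.comp_hasDerivAt_of_eq t h rfl

lemma hasDerivAt_comp_fst {f : ℝ × ℝ → F} {t s : ℝ} (hf : DifferentiableAt ℝ f (t, s)) :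
    HasDerivAt (fun τ => f (τ, s)) (fderiv ℝ f (t, s) (1, 0)) t := by
  have h : HasDerivAt (fun τ => (τ, s)) ((1 : ℝ), (0 : ℝ)) t :=
    (hasDerivAt_id t).prodMk (hasDerivAt_const t s)
  simpa [Function.comp_def] using hf.hasFDerivAt.comp_hasDerivAt_of_eq t h rfl

lemma fderiv_comp_fst {f : E × ℝ → F} {x : E} {t : ℝ} (hf : DifferentiableAt ℝ f (x, t)) :
    fderiv ℝ (fun y => f (y, t)) x = (fderiv ℝ f (x, t)).comp (ContinuousLinearMap.inl ℝ E ℝ) := by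
  have h : HasFDerivAt (fun y => f (y, t))
      ((fderiv ℝ f (x, t)).comp (ContinuousLinearMap.inl ℝ E ℝ)) x :=
    hf.hasFDerivAt.comp x (hasFDerivAt_prodMk_left x t)
  exact h.fderiv

lemma fderiv_comp_fst_apply {f : E × ℝ → F} {x : E} {t : ℝ} (hf : DifferentiableAt ℝ f (x, t))
    (v : E) : fderiv ℝ (fun y => f (y, t)) x v = fderiv ℝ f (x, t) (v, 0) := by
  rw [fderiv_comp_fst hf]; rfl

lemma hasDerivAt_pi_component {f : ℝ → Fin 3 → ℝ} {f' : Fin 3 → ℝ} {t : ℝ} (i : Fin 3)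
    (hf : HasDerivAt f f' t) : HasDerivAt (fun τ => f τ i) (f' i) t := by
  simpa [Function.comp_def] using
    ((ContinuousLinearMap.proj (R := ℝ) (φ := fun _ : Fin 3 => ℝ) i).hasFDerivAt.comp_hasDerivAt t hf)

lemma fderiv_pi_component {f : E → Fin 3 → ℝ} {x : E} (hf : DifferentiableAt ℝ f x) (i : Fin 3)
    (v : E) : fderiv ℝ (fun y => f y i) x v = fderiv ℝ f x v i := by
  have h :=
    ((ContinuousLinearMap.proj (R := ℝ) (φ := fun _ : Fin 3 => ℝ) i).hasFDerivAt).comp x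
      hf.hasFDerivAt
  rw [show (fun y => f y i) = (fun w : Fin 3 → ℝ => w i) ∘ f from rfl]
  rw [show (fun w : Fin 3 → ℝ => w i) ∘ f
      = (ContinuousLinearMap.proj (R := ℝ) (φ := fun _ : Fin 3 => ℝ) i) ∘ f from rfl, h.fderiv]
  rfl

lemma clm_expand (L : (Fin 3 → ℝ) →L[ℝ] ℝ) (w : Fin 3 → ℝ) :
    L w = ∑ j : Fin 3, w j * L (Pi.single j 1) := by
  have hw : w = ∑ j : Fin 3, (w j) • (Pi.single j 1 : Fin 3 → ℝ) := by
    ext k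
    simp [Finset.sum_apply, Pi.single_apply]
  conv_lhs => rw [hw]
  rw [map_sum]
  simp [smul_eq_mul]

lemma pi_contDiff_component {f : E → Fin 3 → ℝ} (hf : ContDiff ℝ (⊤ : ℕ∞) f) (i : Fin 3) :
    ContDiff ℝ (⊤ : ℕ∞) (fun y => f y i) :=
  (ContinuousLinearMap.proj (R := ℝ) (φ := fun _ : Fin 3 => ℝ) i).contDiff.comp hf

lemma clairaut {f : ℝ × ℝ → F} (hf : ContDiff ℝ (⊤ : ℕ∞) f) (t s : ℝ) :
    deriv (fun τ => fderiv ℝ f (τ, s) (0, 1)) t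
      = deriv (fun σ => fderiv ℝ f (t, σ) (1, 0)) s := by
  have hd : Differentiable ℝ f := hf.differentiable (by simp)
  have hf1 : ContDiff ℝ (⊤ : ℕ∞) (fderiv ℝ f) := hf.fderiv_right (by simp)
  have hx : HasFDerivAt (fderiv ℝ f) (fderiv ℝ (fderiv ℝ f) (t, s)) (t, s) :=
    ((hf1.differentiable (by simp)) (t, s)).hasFDerivAt
  have hsym := second_derivative_symmetric (fun y => (hd y).hasFDerivAt) hx
  have hg1 : DifferentiableAt ℝ (fun q : ℝ × ℝ => fderiv ℝ f q (0, 1)) (t, s) := by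
    exact (hf1.differentiable (by simp)).differentiableAt.clm_apply (differentiableAt_const _)
  have hg2 : DifferentiableAt ℝ (fun q : ℝ × ℝ => fderiv ℝ f q (1, 0)) (t, s) := by
    exact (hf1.differentiable (by simp)).differentiableAt.clm_apply (differentiableAt_const _)
  have e1 : ∀ v : ℝ × ℝ, fderiv ℝ (fun q : ℝ × ℝ => fderiv ℝ f q v) (t, s)
      = (ContinuousLinearMap.apply ℝ F v).comp (fderiv ℝ (fderiv ℝ f) (t, s)) := by
    intro v
    exact (((ContinuousLinearMap.apply ℝ F v).hasFDerivAt).comp (t, s) hx).fderiv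
  rw [(hasDerivAt_comp_fst hg1).deriv, (hasDerivAt_comp_snd hg2).deriv, e1, e1]
  exact hsym (1, 0) (0, 1)

lemma curve_hasDerivAt (u : (Fin 3 → ℝ) → ℝ → (Fin 3 → ℝ)) (c : ℝ → ℝ → (Fin 3 → ℝ))
    (hc : ContDiff ℝ (⊤ : ℕ∞) (fun q : ℝ × ℝ => c q.1 q.2))
    (hadv : ∀ t s, deriv (fun τ => c τ s) t = u (c t s) t) (t s : ℝ) :
    HasDerivAt (fun τ => c τ s) (u (c t s) t) t := by
  have hdiff : DifferentiableAt ℝ (fun τ => c τ s) t := by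
    have h1 : DifferentiableAt ℝ (fun τ : ℝ => ((τ, s) : ℝ × ℝ)) t :=
      differentiableAt_id.prodMk (differentiableAt_const _)
    exact ((hc.differentiable (by simp)) (t, s)).comp t h1
  have := hdiff.hasDerivAt
  rwa [hadv t s] at this

lemma loop_closed (u : (Fin 3 → ℝ) → ℝ → (Fin 3 → ℝ))
    (hu : ContDiff ℝ (⊤ : ℕ∞) (fun q : (Fin 3 → ℝ) × ℝ => u q.1 q.2))
    (c : ℝ → ℝ → (Fin 3 → ℝ))
    (hc : ContDiff ℝ (⊤ : ℕ∞) (fun q : ℝ × ℝ => c q.1 q.2))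
    (hadv : ∀ t s, deriv (fun τ => c τ s) t = u (c t s) t)
    (h0 : c 0 1 = c 0 0) : ∀ t, c t 1 = c t 0 := by
  intro t₁
  set a : ℝ := -(|t₁| + 1) with ha
  set b : ℝ := |t₁| + 1 with hb
  have hab : a < b := by
    have : (0:ℝ) < |t₁| + 1 := by positivity
    simp only [ha, hb]; linarith
  have hcont : ∀ σ : ℝ, Continuous (fun τ => c τ σ) := by
    intro σ
    exact (hc.continuous).comp (continuous_id.prodMk continuous_const)
  obtain ⟨R1, hR1⟩ := (isCompact_Icc (a := a) (b := b)).exists_bound_of_continuousOn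
    ((hcont 1).continuousOn (s := Icc a b))
  obtain ⟨R2, hR2⟩ := (isCompact_Icc (a := a) (b := b)).exists_bound_of_continuousOn
    ((hcont 0).continuousOn (s := Icc a b))
  set R : ℝ := max R1 R2 with hR
  have hR0 : 0 ≤ R := by
    have := hR1 a ⟨le_refl a, le_of_lt hab⟩
    have h2 := norm_nonneg (c a 1)
    have : 0 ≤ R1 := le_trans h2 this
    simp only [hR]; exact le_trans this (le_max_left _ _)
  -- bound on the derivative of u on a compact set
  have hfd : Continuous (fderiv ℝ (fun q : (Fin 3 → ℝ) × ℝ => u q.1 q.2)) :=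
    ((hu.fderiv_right (m := (⊤ : ℕ∞)) (by simp))).continuous
  obtain ⟨M, hM⟩ := ((isCompact_closedBall (0 : Fin 3 → ℝ) R).prod
    (isCompact_Icc (a := a) (b := b))).exists_bound_of_continuousOn hfd.continuousOn
  have hM0 : 0 ≤ M := by
    refine le_trans (norm_nonneg _) (hM (0, a) ?_)
    exact ⟨Metric.mem_closedBall_self hR0, ⟨le_refl a, le_of_lt hab⟩⟩
  set K : NNReal := ⟨M, hM0⟩ with hK
  set S : ℝ → Set (Fin 3 → ℝ) := fun τ =>
    if τ ∈ Icc a b then Metric.closedBall (0 : Fin 3 → ℝ) R else ∅ with hS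
  have hudiff : ∀ (τ : ℝ) (x : Fin 3 → ℝ), DifferentiableAt ℝ (fun y => u y τ) x := by
    intro τ x
    exact ((hu.differentiable (by simp)) (x, τ)).comp (f := fun y : Fin 3 → ℝ => (y, τ)) x
      (differentiableAt_id.prodMk (differentiableAt_const _))
  have hv : ∀ τ, LipschitzOnWith K (fun x => u x τ) (S τ) := by
    intro τ
    simp only [hS]
    split_ifs with hτ
    · refine Convex.lipschitzOnWith_of_nnnorm_fderiv_le (fun x _ => hudiff τ x) ?_
        (convex_closedBall _ _)
      intro x hx
      have hcomp : fderiv ℝ (fun y => u y τ) x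
          = (fderiv ℝ (fun q : (Fin 3 → ℝ) × ℝ => u q.1 q.2) (x, τ)).comp
              (ContinuousLinearMap.inl ℝ (Fin 3 → ℝ) ℝ) :=
        fderiv_comp_fst ((hu.differentiable (by simp)) (x, τ))
      rw [← NNReal.coe_le_coe, coe_nnnorm, hcomp]
      refine ContinuousLinearMap.opNorm_le_bound _ hM0 ?_
      intro v
      have h1 : ‖(fderiv ℝ (fun q : (Fin 3 → ℝ) × ℝ => u q.1 q.2) (x, τ))‖ ≤ M :=
        hM (x, τ) ⟨hx, hτ⟩
      have h2 : ‖((v, 0) : (Fin 3 → ℝ) × ℝ)‖ = ‖v‖ := by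
        simp [Prod.norm_def]
      calc ‖(fderiv ℝ (fun q : (Fin 3 → ℝ) × ℝ => u q.1 q.2) (x, τ)) (v, 0)‖
          ≤ ‖fderiv ℝ (fun q : (Fin 3 → ℝ) × ℝ => u q.1 q.2) (x, τ)‖ * ‖((v, 0) : (Fin 3 → ℝ) × ℝ)‖ :=
            ContinuousLinearMap.le_opNorm _ _
        _ ≤ M * ‖v‖ := by rw [h2]; exact mul_le_mul_of_nonneg_right h1 (norm_nonneg v)
    · exact lipschitzOnWith_empty _ _
  have hB : b = |t₁| + 1 := hb
  have hA : a = -(|t₁| + 1) := by rw [ha, hB]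
  have ht0 : (0 : ℝ) ∈ Ioo a b := by
    constructor
    · rw [hA]
      have h9 : (0:ℝ) < |t₁| + 1 := by positivity
      linarith
    · rw [hB]; positivity
  have hmem1 : ∀ τ ∈ Ioo a b, c τ 1 ∈ S τ := by
    intro τ hτ
    have hτ' : τ ∈ Icc a b := Ioo_subset_Icc_self hτ
    simp only [hS, if_pos hτ']
    rw [mem_closedBall_zero_iff]
    exact le_trans (hR1 τ hτ') (le_max_left _ _)
  have hmem0 : ∀ τ ∈ Ioo a b, c τ 0 ∈ S τ := by
    intro τ hτ
    have hτ' : τ ∈ Icc a b := Ioo_subset_Icc_self hτ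
    simp only [hS, if_pos hτ']
    rw [mem_closedBall_zero_iff]
    exact le_trans (hR2 τ hτ') (le_max_right _ _)
  have key := ODE_solution_unique_of_mem_Icc (fun τ _ => hv τ) ht0 ((hcont 1).continuousOn)
    (fun τ _ => curve_hasDerivAt u c hc hadv τ 1) hmem1
    ((hcont 0).continuousOn) (fun τ _ => curve_hasDerivAt u c hc hadv τ 0) hmem0 h0
  refine key ⟨?_, ?_⟩
  · rw [hA]; linarith [neg_abs_le t₁]
  · rw [hB]; linarith [le_abs_self t₁]

end KelvinAux
open KelvinAux
/-- Kelvin circulation theorem for the dissipative Oberbeck–Boussinesq equations: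
if `u` satisfies `∂ₜu + (u·∇)u = −∇p + ν Δu + α g T e₃` and the closed loop `c(t,·)`
is advected by `u`, then the circulation `I(t) = ∮ u · dx` satisfies
`I′(t) = ∮ (α g T e₃ + ν Δu) · dx`. -/
theorem kelvin_circulation_dissipative_oberbeck_boussinesq
    (u : (Fin 3 → ℝ) → ℝ → (Fin 3 → ℝ))
    (p T : (Fin 3 → ℝ) → ℝ → ℝ)
    (α g ν : ℝ)
    (hu : ContDiff ℝ (⊤ : ℕ∞) (fun q : (Fin 3 → ℝ) × ℝ => u q.1 q.2))
    (hp : ContDiff ℝ (⊤ : ℕ∞) (fun q : (Fin 3 → ℝ) × ℝ => p q.1 q.2))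
    (hT : ContDiff ℝ (⊤ : ℕ∞) (fun q : (Fin 3 → ℝ) × ℝ => T q.1 q.2))
    (hmom : ∀ (x : Fin 3 → ℝ) (t : ℝ) (i : Fin 3),
      deriv (fun τ => u x τ i) t
        + ∑ j : Fin 3, u x t j * fderiv ℝ (fun y => u y t i) x (Pi.single j 1)
      = - fderiv ℝ (fun y => p y t) x (Pi.single i 1)
        + ν * (∑ j : Fin 3,
            fderiv ℝ (fun y => fderiv ℝ (fun z => u z t i) y (Pi.single j 1)) x
              (Pi.single j 1))
        + α * g * T x t * (if i = 2 then 1 else 0))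
    (c₀ : ℝ → (Fin 3 → ℝ))
    (hc₀ : ContDiff ℝ (⊤ : ℕ∞) c₀)
    (hper : ∀ s, c₀ (s + 1) = c₀ s)
    (c : ℝ → ℝ → (Fin 3 → ℝ))
    (hc : ContDiff ℝ (⊤ : ℕ∞) (fun q : ℝ × ℝ => c q.1 q.2))
    (hc0 : ∀ s, c 0 s = c₀ s)
    (hadv : ∀ t s, deriv (fun τ => c τ s) t = u (c t s) t)
    (I : ℝ → ℝ)
    (hI : ∀ t, I t =
      ∫ s in (0:ℝ)..1, ∑ i : Fin 3, u (c t s) t i * deriv (fun σ => c t σ) s i) :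
    ∀ t, HasDerivAt I
      (∫ s in (0:ℝ)..1, ∑ i : Fin 3,
        (α * g * T (c t s) t * (if i = 2 then 1 else 0)
          + ν * (∑ j : Fin 3,
              fderiv ℝ (fun y => fderiv ℝ (fun z => u z t i) y (Pi.single j 1)) (c t s)
                (Pi.single j 1)))
          * deriv (fun σ => c t σ) s i) t := by
  classical
  intro t₀
  have hγd : Differentiable ℝ (fun w : ℝ × ℝ => c w.1 w.2) := hc.differentiable (by simp)
  have hD : ContDiff ℝ (⊤ : ℕ∞)
      (fun w : ℝ × ℝ => fderiv ℝ (fun w : ℝ × ℝ => c w.1 w.2) w ((0:ℝ), (1:ℝ))) :=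
    (hc.fderiv_right (m := (⊤ : ℕ∞)) (by simp)).clm_apply contDiff_const
  have hcs : ∀ t s : ℝ, HasDerivAt (fun σ => c t σ)
      (fderiv ℝ (fun w : ℝ × ℝ => c w.1 w.2) (t, s) (0, 1)) s := by
    intro t s
    exact KelvinAux.hasDerivAt_comp_snd (hγd (t, s))
  have hderiv_s : ∀ t s : ℝ, deriv (fun σ => c t σ) s
      = fderiv ℝ (fun w : ℝ × ℝ => c w.1 w.2) (t, s) (0, 1) := fun t s => (hcs t s).deriv
  have hct : ∀ t s : ℝ, HasDerivAt (fun τ => c τ s) (u (c t s) t) t :=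
    KelvinAux.curve_hasDerivAt u c hc hadv
  -- the integrand as a jointly smooth function
  set Φ : ℝ × ℝ → ℝ := fun w => ∑ i : Fin 3, u (c w.1 w.2) w.1 i *
      fderiv ℝ (fun w : ℝ × ℝ => c w.1 w.2) w (0, 1) i with hΦdef
  have hΦ : ContDiff ℝ (⊤ : ℕ∞) Φ := by
    apply ContDiff.sum; intro i _
    have h1 : ContDiff ℝ (⊤ : ℕ∞) (fun w : ℝ × ℝ => u (c w.1 w.2) w.1) :=
      hu.comp (hc.prodMk contDiff_fst)
    exact (KelvinAux.pi_contDiff_component h1 i).mul (KelvinAux.pi_contDiff_component hD i)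
  have hΦd : Differentiable ℝ Φ := hΦ.differentiable (by simp)
  have hIΦ : I = fun t => ∫ s in (0:ℝ)..1, Φ (t, s) := by
    funext t
    rw [hI t]
    apply intervalIntegral.integral_congr
    intro s _
    exact Finset.sum_congr rfl fun i _ => by rw [hderiv_s]
  -- differentiation under the integral sign
  have hΦ' : Continuous (fun w : ℝ × ℝ => fderiv ℝ Φ w (1, 0)) :=
    ((hΦ.fderiv_right (m := (⊤ : ℕ∞)) (by simp)).clm_apply contDiff_const).continuous
  have hΦint : ∀ t : ℝ, IntervalIntegrable (fun s => Φ (t, s)) MeasureTheory.volume 0 1 :=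
    fun t => (hΦ.continuous.comp (continuous_const.prodMk continuous_id)).intervalIntegrable 0 1
  obtain ⟨C, hC⟩ := (((isCompact_Icc (a := t₀ - 1) (b := t₀ + 1)).prod
    (isCompact_Icc (a := (0:ℝ)) (b := 1)))).exists_bound_of_continuousOn hΦ'.continuousOn
  have main := (intervalIntegral.hasDerivAt_integral_of_dominated_loc_of_deriv_le
      (F := fun t s => Φ (t, s)) (F' := fun t s => fderiv ℝ Φ (t, s) (1, 0))
      (bound := fun _ => C) (a := 0) (b := 1) (x₀ := t₀) (s := Metric.ball t₀ 1) (Metric.ball_mem_nhds t₀ one_pos)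
      (Filter.Eventually.of_forall fun t =>
        ((hΦ.continuous.comp (continuous_const.prodMk continuous_id)).aestronglyMeasurable))
      (hΦint t₀)
      ((hΦ'.comp (continuous_const.prodMk continuous_id)).aestronglyMeasurable)
      (MeasureTheory.ae_of_all _ (fun s hs t ht => ?_))
      (intervalIntegrable_const)
      (MeasureTheory.ae_of_all _ (fun s _ t _ =>
        KelvinAux.hasDerivAt_comp_fst (hΦd (t, s))))).2
  · rw [hIΦ]
    -- basic differentiability facts
    have huid : ∀ (i : Fin 3), Differentiable ℝ (fun q : (Fin 3 → ℝ) × ℝ => u q.1 q.2 i) :=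
      fun i => (KelvinAux.pi_contDiff_component hu i).differentiable (by simp)
    have hpd : Differentiable ℝ (fun q : (Fin 3 → ℝ) × ℝ => p q.1 q.2) := hp.differentiable (by simp)
    have huyt : ∀ (t : ℝ) (i : Fin 3), Differentiable ℝ (fun y => u y t i) := by
      intro t i
      exact fun y => ((huid i) (y, t)).comp (f := fun y : Fin 3 → ℝ => (y, t)) y (differentiableAt_id.prodMk (differentiableAt_const _))
    have hpyt : ∀ t : ℝ, Differentiable ℝ (fun y => p y t) := by
      intro t
      exact fun y => (hpd (y, t)).comp (f := fun y : Fin 3 → ℝ => (y, t)) y (differentiableAt_id.prodMk (differentiableAt_const _))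
    -- derivative of σ ↦ u (c t₀ σ) t₀ i
    have hw : ∀ (s : ℝ) (i : Fin 3), HasDerivAt (fun σ => u (c t₀ σ) t₀ i)
        (fderiv ℝ (fun y => u y t₀ i) (c t₀ s)
          (fderiv ℝ (fun w : ℝ × ℝ => c w.1 w.2) (t₀, s) (0, 1))) s := by
      intro s i
      exact (((huyt t₀ i) (c t₀ s)).hasFDerivAt).comp_hasDerivAt s (hcs t₀ s)
    -- the potential-like function G
    set G : ℝ → ℝ := fun σ => (1/2) * ∑ i : Fin 3, (u (c t₀ σ) t₀ i)^2 - p (c t₀ σ) t₀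
      with hGdef
    have hbase : ContDiff ℝ (⊤ : ℕ∞) (fun σ : ℝ => ((c t₀ σ, t₀) : (Fin 3 → ℝ) × ℝ)) :=
      (hc.comp (contDiff_const.prodMk contDiff_id)).prodMk contDiff_const
    have hGsm : ContDiff ℝ (⊤ : ℕ∞) G := by
      refine ContDiff.sub (ContDiff.mul contDiff_const (ContDiff.sum fun i _ => ?_))
        (hp.comp hbase)
      exact ((KelvinAux.pi_contDiff_component hu i).comp hbase).pow 2
    have hGderiv : ∀ s : ℝ, HasDerivAt G
        ((∑ i : Fin 3, u (c t₀ s) t₀ i *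
            fderiv ℝ (fun y => u y t₀ i) (c t₀ s)
              (fderiv ℝ (fun w : ℝ × ℝ => c w.1 w.2) (t₀, s) (0, 1)))
          - fderiv ℝ (fun y => p y t₀) (c t₀ s)
              (fderiv ℝ (fun w : ℝ × ℝ => c w.1 w.2) (t₀, s) (0, 1))) s := by
      intro s
      have h1 := HasDerivAt.fun_sum (fun (i : Fin 3) (_ : i ∈ Finset.univ) => ((hw s i).pow 2))
      have h2 : HasDerivAt (fun σ => p (c t₀ σ) t₀)
          (fderiv ℝ (fun y => p y t₀) (c t₀ s)
            (fderiv ℝ (fun w : ℝ × ℝ => c w.1 w.2) (t₀, s) (0, 1))) s :=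
        ((hpyt t₀) (c t₀ s)).hasFDerivAt.comp_hasDerivAt s (hcs t₀ s)
      have h3 : HasDerivAt G _ s := (h1.const_mul (1/2 : ℝ)).sub h2
      refine h3.congr_deriv ?_
      rw [Finset.mul_sum]
      congr 1
      refine Finset.sum_congr rfl fun i _ => ?_
      push_cast
      ring
    -- the coefficient function from the momentum equation
    set Tf : ℝ → ℝ := fun s => ∑ i : Fin 3,
        (α * g * T (c t₀ s) t₀ * (if i = 2 then 1 else 0)
          + ν * (∑ j : Fin 3,
              fderiv ℝ (fun y => fderiv ℝ (fun z => u z t₀ i) y (Pi.single j 1)) (c t₀ s)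
                (Pi.single j 1)))
          * fderiv ℝ (fun w : ℝ × ℝ => c w.1 w.2) (t₀, s) (0, 1) i with hTfdef
    -- momentum equation along the curve
    have ha_eq : ∀ (s : ℝ) (i : Fin 3),
        fderiv ℝ (fun q : (Fin 3 → ℝ) × ℝ => u q.1 q.2 i) (c t₀ s, t₀) (u (c t₀ s) t₀, 1)
        = - fderiv ℝ (fun y => p y t₀) (c t₀ s) (Pi.single i 1)
          + ν * (∑ j : Fin 3, fderiv ℝ
              (fun y => fderiv ℝ (fun z => u z t₀ i) y (Pi.single j 1)) (c t₀ s)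
              (Pi.single j 1))
          + α * g * T (c t₀ s) t₀ * (if i = 2 then 1 else 0) := by
      intro s i
      have hdiffi : DifferentiableAt ℝ (fun q : (Fin 3 → ℝ) × ℝ => u q.1 q.2 i) (c t₀ s, t₀) :=
        (huid i) _
      have hsplit : ((u (c t₀ s) t₀, (1:ℝ)) : (Fin 3 → ℝ) × ℝ)
          = (u (c t₀ s) t₀, 0) + ((0 : Fin 3 → ℝ), (1:ℝ)) := by simp
      rw [hsplit, map_add]
      have e1 : fderiv ℝ (fun q : (Fin 3 → ℝ) × ℝ => u q.1 q.2 i) (c t₀ s, t₀)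
            (u (c t₀ s) t₀, 0)
          = fderiv ℝ (fun y => u y t₀ i) (c t₀ s) (u (c t₀ s) t₀) :=
        (KelvinAux.fderiv_comp_fst_apply hdiffi _).symm
      have e2 : fderiv ℝ (fun q : (Fin 3 → ℝ) × ℝ => u q.1 q.2 i) (c t₀ s, t₀)
            ((0 : Fin 3 → ℝ), (1:ℝ))
          = deriv (fun τ => u (c t₀ s) τ i) t₀ :=
        ((KelvinAux.hasDerivAt_comp_snd hdiffi).deriv).symm
      rw [e1, e2, KelvinAux.clm_expand (fderiv ℝ (fun y => u y t₀ i) (c t₀ s))]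
      rw [add_comm]
      exact hmom (c t₀ s) t₀ i
    -- time derivative of u along the curve
    have hA : ∀ (s : ℝ) (i : Fin 3), HasDerivAt (fun τ => u (c τ s) τ i)
        (fderiv ℝ (fun q : (Fin 3 → ℝ) × ℝ => u q.1 q.2 i) (c t₀ s, t₀)
          (u (c t₀ s) t₀, 1)) t₀ :=
      fun s i => KelvinAux.hasDerivAt_comp_pair ((huid i) _) (hct t₀ s)
    -- time derivative of ∂ₛc, via symmetry of second derivatives
    have hB : ∀ (s : ℝ) (i : Fin 3), HasDerivAt
        (fun τ => fderiv ℝ (fun w : ℝ × ℝ => c w.1 w.2) (τ, s) (0, 1) i)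
        (fderiv ℝ (fun y => u y t₀ i) (c t₀ s)
          (fderiv ℝ (fun w : ℝ × ℝ => c w.1 w.2) (t₀, s) (0, 1))) t₀ := by
      intro s i
      have hDi : ContDiff ℝ (⊤ : ℕ∞) (fun w : ℝ × ℝ =>
          fderiv ℝ (fun w : ℝ × ℝ => c w.1 w.2) w (0, 1) i) :=
        KelvinAux.pi_contDiff_component hD i
      have h1 : HasDerivAt (fun τ => fderiv ℝ (fun w : ℝ × ℝ => c w.1 w.2) (τ, s) (0, 1) i)
          (fderiv ℝ (fun w : ℝ × ℝ =>
            fderiv ℝ (fun w : ℝ × ℝ => c w.1 w.2) w (0, 1) i) (t₀, s) (1, 0)) t₀ :=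
        KelvinAux.hasDerivAt_comp_fst (hDi.differentiable (by simp) (t₀, s))
      have hfc : ContDiff ℝ (⊤ : ℕ∞) (fun w : ℝ × ℝ => c w.1 w.2 i) :=
        KelvinAux.pi_contDiff_component hc i
      have hfun : (fun w : ℝ × ℝ => fderiv ℝ (fun w : ℝ × ℝ => c w.1 w.2) w (0, 1) i)
          = fun w : ℝ × ℝ => fderiv ℝ (fun w : ℝ × ℝ => c w.1 w.2 i) w (0, 1) :=
        funext fun w => (KelvinAux.fderiv_pi_component (hγd w) i _).symm
      have h2 : ∀ σ : ℝ, fderiv ℝ (fun w : ℝ × ℝ => c w.1 w.2 i) (t₀, σ) (1, 0)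
          = u (c t₀ σ) t₀ i := by
        intro σ
        exact (KelvinAux.hasDerivAt_comp_fst (hfc.differentiable (by simp) (t₀, σ))).unique
          (KelvinAux.hasDerivAt_pi_component i (hct t₀ σ))
      have hval : fderiv ℝ (fun w : ℝ × ℝ =>
            fderiv ℝ (fun w : ℝ × ℝ => c w.1 w.2) w (0, 1) i) (t₀, s) (1, 0)
          = fderiv ℝ (fun y => u y t₀ i) (c t₀ s)
              (fderiv ℝ (fun w : ℝ × ℝ => c w.1 w.2) (t₀, s) (0, 1)) := by
        rw [hfun]
        have hg : DifferentiableAt ℝ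
            (fun w : ℝ × ℝ => fderiv ℝ (fun w : ℝ × ℝ => c w.1 w.2 i) w (0, 1)) (t₀, s) :=
          (((hfc.fderiv_right (m := (⊤ : ℕ∞)) (by simp)).clm_apply contDiff_const).differentiable
            (by simp)) (t₀, s)
        rw [← (KelvinAux.hasDerivAt_comp_fst hg).deriv]
        rw [KelvinAux.clairaut hfc t₀ s]
        have he : (fun σ : ℝ => fderiv ℝ (fun w : ℝ × ℝ => c w.1 w.2 i) (t₀, σ) (1, 0))
            = fun σ : ℝ => u (c t₀ σ) t₀ i := funext h2
        rw [he]
        exact (hw s i).deriv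
      rw [hval] at h1
      exact h1
    -- the pointwise identity
    have hpoint : ∀ s : ℝ, fderiv ℝ Φ (t₀, s) (1, 0) = Tf s + deriv G s := by
      intro s
      have hprod : HasDerivAt (fun τ => Φ (τ, s))
          (∑ i : Fin 3,
            (fderiv ℝ (fun q : (Fin 3 → ℝ) × ℝ => u q.1 q.2 i) (c t₀ s, t₀)
                (u (c t₀ s) t₀, 1)
              * fderiv ℝ (fun w : ℝ × ℝ => c w.1 w.2) (t₀, s) (0, 1) i
            + u (c t₀ s) t₀ i *
              fderiv ℝ (fun y => u y t₀ i) (c t₀ s)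
                (fderiv ℝ (fun w : ℝ × ℝ => c w.1 w.2) (t₀, s) (0, 1)))) t₀ := by
        simp only [hΦdef]
        exact HasDerivAt.fun_sum fun i _ => (hA s i).mul (hB s i)
      have hΦeq := (KelvinAux.hasDerivAt_comp_fst (hΦd (t₀, s))).unique hprod
      rw [hΦeq, (hGderiv s).deriv, hTfdef,
        KelvinAux.clm_expand (fderiv ℝ (fun y => p y t₀) (c t₀ s)), Finset.sum_add_distrib]
      have hkey : (∑ i : Fin 3,
            fderiv ℝ (fun q : (Fin 3 → ℝ) × ℝ => u q.1 q.2 i) (c t₀ s, t₀)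
                (u (c t₀ s) t₀, 1)
              * fderiv ℝ (fun w : ℝ × ℝ => c w.1 w.2) (t₀, s) (0, 1) i)
          = (∑ i : Fin 3,
              (α * g * T (c t₀ s) t₀ * (if i = 2 then 1 else 0)
                + ν * (∑ j : Fin 3,
                    fderiv ℝ (fun y => fderiv ℝ (fun z => u z t₀ i) y (Pi.single j 1))
                      (c t₀ s) (Pi.single j 1)))
                * fderiv ℝ (fun w : ℝ × ℝ => c w.1 w.2) (t₀, s) (0, 1) i)
            - ∑ i : Fin 3,
                fderiv ℝ (fun w : ℝ × ℝ => c w.1 w.2) (t₀, s) (0, 1) i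
                  * fderiv ℝ (fun y => p y t₀) (c t₀ s) (Pi.single i 1) := by
        rw [← Finset.sum_sub_distrib]
        refine Finset.sum_congr rfl fun i _ => ?_
        rw [ha_eq s i]
        ring
      rw [hkey]
      ring
    -- closing of the loop
    have hclosed : ∀ t, c t 1 = c t 0 := by
      apply KelvinAux.loop_closed u hu c hc hadv
      rw [hc0, hc0]
      have := hper 0
      norm_num at this
      exact this
    have hG10 : G 1 = G 0 := by
      simp only [hGdef, hclosed t₀]
    -- integral computations
    have hdGc : Continuous (deriv G) := hGsm.continuous_deriv (by simp)
    have hiG : (∫ s in (0:ℝ)..1, deriv G s) = 0 := by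
      rw [intervalIntegral.integral_deriv_eq_sub
        (fun x _ => hGsm.differentiable (by simp) x)
        (hdGc.intervalIntegrable 0 1), hG10, sub_self]
    have hTcont : Continuous Tf := by
      have he : Tf = fun s => fderiv ℝ Φ (t₀, s) (1, 0) - deriv G s := by
        funext s
        rw [hpoint s]
        ring
      rw [he]
      exact (hΦ'.comp (continuous_const.prodMk continuous_id)).sub hdGc
    have h5 : (∫ s in (0:ℝ)..1, fderiv ℝ Φ (t₀, s) (1, 0)) = ∫ s in (0:ℝ)..1, Tf s := by
      have := intervalIntegral.integral_add (μ := MeasureTheory.volume) (hTcont.intervalIntegrable 0 1)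
        (hdGc.intervalIntegrable 0 1)
      rw [intervalIntegral.integral_congr (g := fun s => Tf s + deriv G s)
        (fun s _ => hpoint s), this, hiG, add_zero]
    have h7 : (∫ s in (0:ℝ)..1, ∑ i : Fin 3,
        (α * g * T (c t₀ s) t₀ * (if i = 2 then 1 else 0)
          + ν * (∑ j : Fin 3,
              fderiv ℝ (fun y => fderiv ℝ (fun z => u z t₀ i) y (Pi.single j 1)) (c t₀ s)
                (Pi.single j 1)))
          * deriv (fun σ => c t₀ σ) s i) = ∫ s in (0:ℝ)..1, Tf s := by
      refine intervalIntegral.integral_congr fun s _ => ?_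
      rw [hTfdef]
      exact Finset.sum_congr rfl fun i _ => by rw [hderiv_s]
    rw [h7, ← h5]
    exact main
  · -- the bound
    have hs' : s ∈ Set.Icc (0:ℝ) 1 := by
      rw [Set.uIoc_of_le (by norm_num : (0:ℝ) ≤ 1)] at hs
      exact Set.mem_Icc_of_Ioc hs
    have ht' : t ∈ Set.Icc (t₀ - 1) (t₀ + 1) := by
      rw [Metric.mem_ball, Real.dist_eq, abs_sub_lt_iff] at ht
      constructor <;> linarith [ht.1, ht.2]
    exact hC (t, s) ⟨ht', hs'⟩
end

section
/- Let u, ũ : ℝ³ × ℝ → ℝ³ be smooth vector fields. Let c₀ : ℝ → ℝ³ be a smooth closed loop with c₀(s+1) = c₀(s) for all s, and let c(t,s) be the loop advected by ũ, i.e. c(0,s) = c₀(s) and ∂ₜc(t,s) = ũ(c(t,s), t) for all t, s. Then the circulation I(t) = ∫₀¹ u(c(t,s), t) · ∂ₛc(t,s) ds satisfies I′(t) = ∫₀¹ (∂ₜu + (ũ·∇)u + Σⱼ uⱼ ∇ũʲ)(c(t,s), t) · ∂ₛc(t,s) ds, where Σⱼ uⱼ ∇ũʲ denotes the vector field whose i-th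 component is Σⱼ uⱼ ∂ũʲ/∂xᵢ. -/
open ContinuousLinearMap
noncomputable section
namespace CircAux
abbrev E3 := Fin 3 → ℝ

lemma hasDerivAt_time {F : Type*} [NormedAddCommGroup F] [NormedSpace ℝ F]
    (f : E3 × ℝ → F) (hf : Differentiable ℝ f) (x : E3) (t : ℝ) :
    HasDerivAt (fun τ => f (x, τ)) (fderiv ℝ f (x, t) (0, 1)) t := by
  have h1 : HasDerivAt (fun τ : ℝ => (x, τ)) ((0 : E3), (1 : ℝ)) t :=
    (hasDerivAt_const t x).prodMk (hasDerivAt_id t)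
  exact (hf (x, t)).hasFDerivAt.comp_hasDerivAt t h1

lemma hasDerivAt_fst {F : Type*} [NormedAddCommGroup F] [NormedSpace ℝ F]
    (g : ℝ × ℝ → F) (hg : Differentiable ℝ g) (t s : ℝ) :
    HasDerivAt (fun τ => g (τ, s)) (fderiv ℝ g (t, s) (1, 0)) t := by
  have h1 : HasDerivAt (fun τ : ℝ => (τ, s)) ((1 : ℝ), (0 : ℝ)) t :=
    (hasDerivAt_id t).prodMk (hasDerivAt_const t s)
  exact (hg (t, s)).hasFDerivAt.comp_hasDerivAt t h1

lemma hasDerivAt_snd {F : Type*} [NormedAddCommGroup F] [NormedSpace ℝ F]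
    (g : ℝ × ℝ → F) (hg : Differentiable ℝ g) (t s : ℝ) :
    HasDerivAt (fun σ => g (t, σ)) (fderiv ℝ g (t, s) (0, 1)) s := by
  have h1 : HasDerivAt (fun σ : ℝ => (t, σ)) ((0 : ℝ), (1 : ℝ)) s :=
    (hasDerivAt_const s t).prodMk (hasDerivAt_id s)
  exact (hg (t, s)).hasFDerivAt.comp_hasDerivAt s h1

lemma coordD {f : ℝ → E3} {f' : E3} {t : ℝ} (h : HasDerivAt f f' t) (i : Fin 3) :
    HasDerivAt (fun τ => f τ i) (f' i) t :=
  (ContinuousLinearMap.proj (R := ℝ) (φ := fun _ : Fin 3 => ℝ) i).hasFDerivAt.comp_hasDerivAt t h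

lemma hasFDerivAt_space (f : E3 × ℝ → E3) (hf : Differentiable ℝ f) (x : E3) (t : ℝ) :
    HasFDerivAt (fun y => f (y, t)) ((fderiv ℝ f (x, t)).comp (inl ℝ E3 ℝ)) x :=
  (hf (x, t)).hasFDerivAt.comp x (hasFDerivAt_prodMk_left x t)

lemma fderiv_space_coord (f : E3 × ℝ → E3) (hf : Differentiable ℝ f) (x : E3) (t : ℝ)
    (i : Fin 3) (v : E3) :
    fderiv ℝ (fun y => f (y, t) i) x v = fderiv ℝ f (x, t) (v, 0) i := by
  have h : HasFDerivAt (fun y => f (y, t) i)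
      ((ContinuousLinearMap.proj (R := ℝ) (φ := fun _ : Fin 3 => ℝ) i).comp
        ((fderiv ℝ f (x, t)).comp (inl ℝ E3 ℝ))) x :=
    ((ContinuousLinearMap.proj (R := ℝ) (φ := fun _ : Fin 3 => ℝ)
      i).hasFDerivAt.comp x (hasFDerivAt_space f hf x t) : _)
  rw [h.fderiv]; rfl

lemma apply_expand {F : Type*} [NormedAddCommGroup F] [NormedSpace ℝ F]
    (L : (E3 × ℝ) →L[ℝ] F) (v : E3) :
    L (v, 0) = ∑ j : Fin 3, v j • L (Pi.single j 1, 0) := by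
  have hv : (v, (0:ℝ)) = ∑ j : Fin 3, v j • ((Pi.single j 1 : E3), (0:ℝ)) := by
    simp only [Prod.smul_mk, smul_zero]
    rw [Prod.ext_iff]
    constructor
    · rw [Prod.fst_sum]
      ext k
      simp [Finset.sum_apply, Pi.single_apply, mul_comm]
    · rw [Prod.snd_sum]; simp
  rw [hv, map_sum]
  exact Finset.sum_congr rfl fun j _ => map_smul L (v j) _

lemma key (U V : E3 × ℝ → E3) (C : ℝ × ℝ → E3)
    (hU : ContDiff ℝ (⊤ : ℕ∞) U) (hV : ContDiff ℝ (⊤ : ℕ∞) V) (hC : ContDiff ℝ (⊤ : ℕ∞) C)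
    (hadv : ∀ t s, deriv (fun τ => C (τ, s)) t = V (C (t, s), t)) (t s : ℝ) :
    HasDerivAt (fun τ => ∑ i : Fin 3, U (C (τ, s), τ) i * deriv (fun σ => C (τ, σ)) s i)
      (∑ i : Fin 3,
        (deriv (fun τ => U (C (t, s), τ) i) t
          + (∑ j : Fin 3, V (C (t, s), t) j *
              fderiv ℝ (fun y => U (y, t) i) (C (t, s)) (Pi.single j 1))
          + (∑ j : Fin 3, U (C (t, s), t) j *
              fderiv ℝ (fun y => V (y, t) j) (C (t, s)) (Pi.single i 1)))
          * deriv (fun σ => C (t, σ)) s i) t := by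
  have hUd : Differentiable ℝ U := hU.differentiable (by simp)
  have hVd : Differentiable ℝ V := hV.differentiable (by simp)
  have hCd : Differentiable ℝ C := hC.differentiable (by simp)
  have hDC : ContDiff ℝ (⊤ : ℕ∞) (fderiv ℝ C) := hC.fderiv_right (by simp)
  have hDCd : Differentiable ℝ (fderiv ℝ C) := hDC.differentiable (by simp)
  have hadv' : ∀ t' s', fderiv ℝ C (t', s') (1, 0) = V (C (t', s'), t') := by
    intro t' s'
    rw [← (hasDerivAt_fst C hCd t' s').deriv]
    exact hadv t' s'
  have hsder : ∀ t' s', deriv (fun σ => C (t', σ)) s' = fderiv ℝ C (t', s') (0, 1) :=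
    fun t' s' => (hasDerivAt_snd C hCd t' s').deriv
  have hfun : (fun τ => ∑ i : Fin 3, U (C (τ, s), τ) i * deriv (fun σ => C (τ, σ)) s i)
      = (fun τ => ∑ i : Fin 3, U (C (τ, s), τ) i * fderiv ℝ C (τ, s) (0, 1) i) := by
    funext τ; simp only [hsder]
  have hx' : HasDerivAt (fun τ => C (τ, s)) (V (C (t, s), t)) t := by
    have h := hasDerivAt_fst C hCd t s
    rwa [hadv' t s] at h
  have hpair : HasDerivAt (fun τ => (C (τ, s), τ)) ((V (C (t, s), t), (1 : ℝ))) t :=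
    hx'.prodMk (hasDerivAt_id t)
  have hA0 : HasDerivAt (fun τ => U (C (τ, s), τ))
      (fderiv ℝ U (C (t, s), t) (V (C (t, s), t), 1)) t :=
    HasFDerivAt.comp_hasDerivAt t (hUd (C (t, s), t)).hasFDerivAt hpair
  have hA : ∀ i : Fin 3, HasDerivAt (fun τ => U (C (τ, s), τ) i)
      (fderiv ℝ U (C (t, s), t) (V (C (t, s), t), 1) i) t := fun i => coordD hA0 i
  have hB0 : HasDerivAt (fun τ => fderiv ℝ C (τ, s)) (fderiv ℝ (fderiv ℝ C) (t, s) (1, 0)) t :=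
    hasDerivAt_fst (fderiv ℝ C) hDCd t s
  have hB1 : HasDerivAt (fun τ => fderiv ℝ C (τ, s) (0, 1))
      (fderiv ℝ (fderiv ℝ C) (t, s) (1, 0) (0, 1)) t :=
    HasFDerivAt.comp_hasDerivAt t
      (ContinuousLinearMap.apply ℝ E3 ((0 : ℝ), (1 : ℝ))).hasFDerivAt hB0
  have hB : ∀ i : Fin 3, HasDerivAt (fun τ => fderiv ℝ C (τ, s) (0, 1) i)
      (fderiv ℝ (fderiv ℝ C) (t, s) (1, 0) (0, 1) i) t := fun i => coordD hB1 i
  have hsymm : fderiv ℝ (fderiv ℝ C) (t, s) (1, 0) (0, 1)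
      = fderiv ℝ (fderiv ℝ C) (t, s) (0, 1) (1, 0) :=
    second_derivative_symmetric (fun y => (hCd y).hasFDerivAt)
      ((hDCd (t, s)).hasFDerivAt) _ _
  have hmix : fderiv ℝ (fderiv ℝ C) (t, s) (0, 1) (1, 0)
      = fderiv ℝ V (C (t, s), t) (fderiv ℝ C (t, s) (0, 1), 0) := by
    have h2 : HasDerivAt (fun σ => fderiv ℝ C (t, σ) (1, 0))
        (fderiv ℝ (fderiv ℝ C) (t, s) (0, 1) (1, 0)) s :=
      HasFDerivAt.comp_hasDerivAt s
        (ContinuousLinearMap.apply ℝ E3 ((1 : ℝ), (0 : ℝ))).hasFDerivAt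
        (hasDerivAt_snd (fderiv ℝ C) hDCd t s)
    have h3 : (fun σ => fderiv ℝ C (t, σ) (1, 0)) = fun σ => V (C (t, σ), t) := by
      funext σ; rw [hadv' t σ]
    rw [h3] at h2
    have hsC : HasDerivAt (fun σ => C (t, σ)) (fderiv ℝ C (t, s) (0, 1)) s :=
      hasDerivAt_snd C hCd t s
    have h4 := HasFDerivAt.comp_hasDerivAt s (hasFDerivAt_space V hVd (C (t, s)) t) hsC
    exact h2.unique h4
  have hprod : ∀ i : Fin 3, HasDerivAt
      (fun τ => U (C (τ, s), τ) i * fderiv ℝ C (τ, s) (0, 1) i)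
      (fderiv ℝ U (C (t, s), t) (V (C (t, s), t), 1) i * fderiv ℝ C (t, s) (0, 1) i
        + U (C (t, s), t) i * fderiv ℝ V (C (t, s), t) (fderiv ℝ C (t, s) (0, 1), 0) i) t := by
    intro i
    have := (hA i).mul (hB i)
    rwa [hsymm, hmix] at this
  have hsum : HasDerivAt
      (fun τ => ∑ i : Fin 3, U (C (τ, s), τ) i * fderiv ℝ C (τ, s) (0, 1) i)
      (∑ i : Fin 3,
        (fderiv ℝ U (C (t, s), t) (V (C (t, s), t), 1) i * fderiv ℝ C (t, s) (0, 1) i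
          + U (C (t, s), t) i * fderiv ℝ V (C (t, s), t) (fderiv ℝ C (t, s) (0, 1), 0) i)) t :=
    HasDerivAt.fun_sum fun i _ => hprod i
  rw [hfun]
  convert hsum using 1
  have hAval : ∀ i : Fin 3, deriv (fun τ => U (C (t, s), τ) i) t
      = fderiv ℝ U (C (t, s), t) (0, 1) i :=
    fun i => (coordD (hasDerivAt_time U hUd (C (t, s)) t) i).deriv
  have hexpU : ∀ i : Fin 3, fderiv ℝ U (C (t, s), t) (V (C (t, s), t), 1) i
      = fderiv ℝ U (C (t, s), t) (0, 1) i
        + ∑ j : Fin 3, V (C (t, s), t) j * fderiv ℝ U (C (t, s), t) (Pi.single j 1, 0) i := by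
    intro i
    have h5 : ((V (C (t, s), t) : E3), (1 : ℝ))
        = ((V (C (t, s), t) : E3), (0 : ℝ)) + ((0 : E3), (1 : ℝ)) := by simp
    rw [h5, map_add, apply_expand]
    simp [Finset.sum_apply, add_comm]
  have hexpV : fderiv ℝ V (C (t, s), t) (fderiv ℝ C (t, s) (0, 1), 0)
      = ∑ j : Fin 3, fderiv ℝ C (t, s) (0, 1) j •
          fderiv ℝ V (C (t, s), t) (Pi.single j 1, 0) :=
    apply_expand _ _
  have halg : ∀ (a b : E3) (W : Fin 3 → Fin 3 → ℝ),
      (∑ i : Fin 3, (∑ j : Fin 3, a j * W i j) * b i)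
        = ∑ i : Fin 3, a i * ∑ j : Fin 3, b j * W j i := by
    intro a b W
    simp only [Finset.sum_mul, Finset.mul_sum]
    rw [Finset.sum_comm]
    exact Finset.sum_congr rfl fun i _ => Finset.sum_congr rfl fun j _ => by ring
  simp only [hsder, hAval, fderiv_space_coord U hUd, fderiv_space_coord V hVd, hexpU, hexpV,
    Finset.sum_apply, Pi.smul_apply, smul_eq_mul]
  simp only [add_mul, Finset.sum_add_distrib]
  congr 1
  exact halg (U (C (t, s), t)) (fderiv ℝ C (t, s) (0, 1))
    (fun i j => fderiv ℝ V (C (t, s), t) (Pi.single i 1, 0) j)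

variable (U V : E3 × ℝ → E3) (C : ℝ × ℝ → E3)

lemma contF (hU : ContDiff ℝ (⊤ : ℕ∞) U) (hC : ContDiff ℝ (⊤ : ℕ∞) C) :
    Continuous (fun q : ℝ × ℝ =>
      ∑ i : Fin 3, U (C (q.1, q.2), q.1) i * deriv (fun σ => C (q.1, σ)) q.2 i) := by
  have hCd := hC.differentiable (by simp)
  have hsder : ∀ (t s : ℝ), deriv (fun σ => C (t, σ)) s = fderiv ℝ C (t, s) (0, 1) :=
    fun t s => (hasDerivAt_snd C hCd t s).deriv
  simp only [hsder]
  have hm : Continuous fun q : ℝ × ℝ => ((C (q.1, q.2) : E3), q.1) :=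
    (hC.continuous.comp (continuous_fst.prodMk continuous_snd)).prodMk continuous_fst
  have hDC : Continuous fun q : ℝ × ℝ => fderiv ℝ C (q.1, q.2) :=
    (hC.continuous_fderiv (by simp)).comp (continuous_fst.prodMk continuous_snd)
  refine continuous_finset_sum _ fun i _ => Continuous.mul ?_ ?_
  · exact (continuous_apply i).comp (hU.continuous.comp hm)
  · exact (continuous_apply i).comp
      ((ContinuousLinearMap.apply ℝ E3 ((0 : ℝ), (1 : ℝ))).continuous.comp hDC)

lemma contPhi (hU : ContDiff ℝ (⊤ : ℕ∞) U) (hV : ContDiff ℝ (⊤ : ℕ∞) V) (hC : ContDiff ℝ (⊤ : ℕ∞) C) :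
    Continuous (fun q : ℝ × ℝ =>
      ∑ i : Fin 3,
        (deriv (fun τ => U (C (q.1, q.2), τ) i) q.1
          + (∑ j : Fin 3, V (C (q.1, q.2), q.1) j *
              fderiv ℝ (fun y => U (y, q.1) i) (C (q.1, q.2)) (Pi.single j 1))
          + (∑ j : Fin 3, U (C (q.1, q.2), q.1) j *
              fderiv ℝ (fun y => V (y, q.1) j) (C (q.1, q.2)) (Pi.single i 1)))
          * deriv (fun σ => C (q.1, σ)) q.2 i) := by
  have hUd := hU.differentiable (by simp)
  have hVd := hV.differentiable (by simp)
  have hCd := hC.differentiable (by simp)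
  have hsder : ∀ (t s : ℝ), deriv (fun σ => C (t, σ)) s = fderiv ℝ C (t, s) (0, 1) :=
    fun t s => (hasDerivAt_snd C hCd t s).deriv
  have htder : ∀ (x : E3) (t : ℝ) (i : Fin 3),
      deriv (fun τ => U (x, τ) i) t = fderiv ℝ U (x, t) (0, 1) i :=
    fun x t i => (coordD (hasDerivAt_time U hUd x t) i).deriv
  simp only [hsder, htder, fderiv_space_coord U hUd, fderiv_space_coord V hVd]
  have hm : Continuous fun q : ℝ × ℝ => ((C (q.1, q.2) : E3), q.1) :=
    (hC.continuous.comp (continuous_fst.prodMk continuous_snd)).prodMk continuous_fst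
  have hdU : Continuous fun q : ℝ × ℝ => fderiv ℝ U (C (q.1, q.2), q.1) :=
    (hU.continuous_fderiv (by simp)).comp hm
  have hdV : Continuous fun q : ℝ × ℝ => fderiv ℝ V (C (q.1, q.2), q.1) :=
    (hV.continuous_fderiv (by simp)).comp hm
  have hDC : Continuous fun q : ℝ × ℝ => fderiv ℝ C (q.1, q.2) :=
    (hC.continuous_fderiv (by simp)).comp (continuous_fst.prodMk continuous_snd)
  have hcU : ∀ (w : E3 × ℝ) (i : Fin 3),
      Continuous fun q : ℝ × ℝ => fderiv ℝ U (C (q.1, q.2), q.1) w i := fun w i =>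
    (continuous_apply i).comp ((ContinuousLinearMap.apply ℝ E3 w).continuous.comp hdU)
  have hcV : ∀ (w : E3 × ℝ) (i : Fin 3),
      Continuous fun q : ℝ × ℝ => fderiv ℝ V (C (q.1, q.2), q.1) w i := fun w i =>
    (continuous_apply i).comp ((ContinuousLinearMap.apply ℝ E3 w).continuous.comp hdV)
  refine continuous_finset_sum _ fun i _ => Continuous.mul (Continuous.add (Continuous.add ?_ ?_) ?_) ?_
  · exact hcU (0, 1) i
  · exact continuous_finset_sum _ fun j _ => Continuous.mul
      ((continuous_apply j).comp (hV.continuous.comp hm)) (hcU (Pi.single j 1, 0) i)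
  · exact continuous_finset_sum _ fun j _ => Continuous.mul
      ((continuous_apply j).comp (hU.continuous.comp hm)) (hcV (Pi.single i 1, 0) j)
  · exact (continuous_apply i).comp
      ((ContinuousLinearMap.apply ℝ E3 ((0 : ℝ), (1 : ℝ))).continuous.comp hDC)
end CircAux
end



/-- Transport identity for the time derivative of a circulation integral: if the
closed loop `c(t,·)` is advected by the vector field `ũ`, then the circulation
`I(t) = ∮ u · dx` of a vector field `u` satisfies
`I′(t) = ∮ (∂ₜu + (ũ·∇)u + Σⱼ uⱼ ∇ũʲ) · dx`. -/
theorem circulation_transport_identity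
    (u ut : (Fin 3 → ℝ) → ℝ → (Fin 3 → ℝ))  -- `ut` is the transport velocity ũ
    (hu : ContDiff ℝ (⊤ : ℕ∞) (fun q : (Fin 3 → ℝ) × ℝ => u q.1 q.2))
    (hut : ContDiff ℝ (⊤ : ℕ∞) (fun q : (Fin 3 → ℝ) × ℝ => ut q.1 q.2))
    (c₀ : ℝ → (Fin 3 → ℝ))
    (hc₀ : ContDiff ℝ (⊤ : ℕ∞) c₀)
    (hper : ∀ s, c₀ (s + 1) = c₀ s)
    (c : ℝ → ℝ → (Fin 3 → ℝ))
    (hc : ContDiff ℝ (⊤ : ℕ∞) (fun q : ℝ × ℝ => c q.1 q.2))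
    (hc0 : ∀ s, c 0 s = c₀ s)
    (hadv : ∀ t s, deriv (fun τ => c τ s) t = ut (c t s) t)
    (I : ℝ → ℝ)
    (hI : ∀ t, I t =
      ∫ s in (0:ℝ)..1, ∑ i : Fin 3, u (c t s) t i * deriv (fun σ => c t σ) s i) :
    ∀ t, HasDerivAt I
      (∫ s in (0:ℝ)..1, ∑ i : Fin 3,
        (deriv (fun τ => u (c t s) τ i) t
          + (∑ j : Fin 3, ut (c t s) t j *
              fderiv ℝ (fun y => u y t i) (c t s) (Pi.single j 1))
          + (∑ j : Fin 3, u (c t s) t j *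
              fderiv ℝ (fun y => ut y t j) (c t s) (Pi.single i 1)))
          * deriv (fun σ => c t σ) s i) t := by

  intro t₀
  have hIfun : I = fun t => ∫ s in (0:ℝ)..1,
      ∑ i : Fin 3, u (c t s) t i * deriv (fun σ => c t σ) s i := funext hI
  have hkey : ∀ (t s : ℝ), HasDerivAt
      (fun τ => ∑ i : Fin 3, u (c τ s) τ i * deriv (fun σ => c τ σ) s i)
      (∑ i : Fin 3,
        (deriv (fun τ => u (c t s) τ i) t
          + (∑ j : Fin 3, ut (c t s) t j *
              fderiv ℝ (fun y => u y t i) (c t s) (Pi.single j 1))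
          + (∑ j : Fin 3, u (c t s) t j *
              fderiv ℝ (fun y => ut y t j) (c t s) (Pi.single i 1)))
          * deriv (fun σ => c t σ) s i) t :=
    fun t s => CircAux.key (fun q => u q.1 q.2) (fun q => ut q.1 q.2) (fun q => c q.1 q.2)
      hu hut hc (fun t s => hadv t s) t s
  have hcontF : Continuous (fun q : ℝ × ℝ =>
      ∑ i : Fin 3, u (c q.1 q.2) q.1 i * deriv (fun σ => c q.1 σ) q.2 i) :=
    CircAux.contF (fun q => u q.1 q.2) (fun q => c q.1 q.2) hu hc
  have hcontP : Continuous (fun q : ℝ × ℝ =>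
      ∑ i : Fin 3,
        (deriv (fun τ => u (c q.1 q.2) τ i) q.1
          + (∑ j : Fin 3, ut (c q.1 q.2) q.1 j *
              fderiv ℝ (fun y => u y q.1 i) (c q.1 q.2) (Pi.single j 1))
          + (∑ j : Fin 3, u (c q.1 q.2) q.1 j *
              fderiv ℝ (fun y => ut y q.1 j) (c q.1 q.2) (Pi.single i 1)))
          * deriv (fun σ => c q.1 σ) q.2 i) :=
    CircAux.contPhi (fun q => u q.1 q.2) (fun q => ut q.1 q.2) (fun q => c q.1 q.2) hu hut hc
  obtain ⟨M, hM⟩ := (isCompact_Icc.prod isCompact_uIcc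
      (s := Set.Icc (t₀ - 1) (t₀ + 1)) (t := Set.uIcc (0:ℝ) 1)).exists_bound_of_continuousOn
    hcontP.continuousOn
  have hmain := (intervalIntegral.hasDerivAt_integral_of_dominated_loc_of_deriv_le
    (μ := MeasureTheory.volume) (a := (0:ℝ)) (b := 1) (x₀ := t₀)
    (F := fun t s => ∑ i : Fin 3, u (c t s) t i * deriv (fun σ => c t σ) s i)
    (F' := fun t s => ∑ i : Fin 3,
        (deriv (fun τ => u (c t s) τ i) t
          + (∑ j : Fin 3, ut (c t s) t j *
              fderiv ℝ (fun y => u y t i) (c t s) (Pi.single j 1))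
          + (∑ j : Fin 3, u (c t s) t j *
              fderiv ℝ (fun y => ut y t j) (c t s) (Pi.single i 1)))
          * deriv (fun σ => c t σ) s i)
    (bound := fun _ => M) (Metric.ball_mem_nhds t₀ one_pos)
    (Filter.Eventually.of_forall fun t =>
      ((hcontF.comp (continuous_const.prodMk continuous_id)).aestronglyMeasurable))
    ((hcontF.comp (continuous_const.prodMk continuous_id)).intervalIntegrable 0 1)
    ((hcontP.comp (continuous_const.prodMk continuous_id)).aestronglyMeasurable)
    (Filter.Eventually.of_forall fun s hs x hx => by
      have hx' : x ∈ Set.Icc (t₀ - 1) (t₀ + 1) := by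
        have := Metric.mem_ball.mp hx
        rw [Real.dist_eq] at this
        have h1 := abs_lt.mp this
        constructor <;> linarith [h1.1, h1.2]
      exact hM (x, s) ⟨hx', Set.uIoc_subset_uIcc hs⟩)
    (intervalIntegrable_const)
    (Filter.Eventually.of_forall fun s _ x _ => hkey x s)).2
  rw [hIfun]
  exact hmain
end

section
/- Let n ≥ 1 and let J : ℝ → Matrix (Fin n) (Fin n) ℝ be continuous. Let v : ℝ → Matrix (Fin n) (Fin n) ℝ be differentiable with v(0) = 1 (the identity matrix) and v′(t) = J(t) * v(t) for all t. Then for all t ∈ ℝ, det (v(t)) = exp (∫₀ᵗ trace (J(s)) ds). -/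
/-!
Differentiating the determinant row by row (it is multilinear in the rows), replacing row `i`
of `v` by row `i` of `J v` multiplies the determinant by `J i i`, so `det v` solves the scalar
equation `f' = (trace J) f` with `f 0 = 1`, whose only solution is `exp (∫₀ᵗ trace J)`.
-/

namespace Matrix

section Derivative

variable {𝕜 : Type*} [NontriviallyNormedField 𝕜] {ι : Type*} [Fintype ι] [DecidableEq ι]

def detRowContinuousMultilinear : ContinuousMultilinearMap 𝕜 (fun _ : ι => ι → 𝕜) 𝕜 :=
  ⟨(detRowAlternating : (ι → 𝕜) [⋀^ι]→ₗ[𝕜] 𝕜).toMultilinearMap, continuous_id.matrix_det⟩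

theorem hasDerivAt_det {v : 𝕜 → Matrix ι ι 𝕜} {A : Matrix ι ι 𝕜} {t : 𝕜}
    (hv : ∀ i j, HasDerivAt (fun τ => v τ i j) (A i j) t) :
    HasDerivAt (fun τ => (v τ).det) (∑ i, ((v t).updateRow i (A i)).det) t := by
  have hrows : HasDerivAt (fun τ => (v τ : ι → ι → 𝕜)) A t :=
    hasDerivAt_pi.2 fun i => hasDerivAt_pi.2 (hv i)
  have h := (detRowContinuousMultilinear.hasFDerivAt (v t)).comp_hasDerivAt t hrows
  exact h.congr_deriv (detRowContinuousMultilinear.linearDeriv_apply (v t) A)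

end Derivative

variable {ι : Type*} [Fintype ι] [DecidableEq ι] {R : Type*} [CommRing R]

theorem det_updateRow_mul_apply (B M : Matrix ι ι R) (i : ι) :
    (M.updateRow i ((B * M) i)).det = B i i * M.det := by
  have hrow : (B * M) i = ∑ k, B i k • M k := by
    ext j
    simp [mul_apply, Finset.sum_apply]
  rw [hrow, det_updateRow_sum, smul_eq_mul]

theorem sum_det_updateRow_mul (B M : Matrix ι ι R) :
    ∑ i, (M.updateRow i ((B * M) i)).det = B.trace * M.det := by
  simp only [det_updateRow_mul_apply, trace, diag, Finset.sum_mul]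

end Matrix

theorem eq_mul_exp_integral_of_hasDerivAt {f a : ℝ → ℝ} (ha : Continuous a)
    (hf : ∀ t, HasDerivAt f (a t * f t) t) (t : ℝ) :
    f t = f 0 * Real.exp (∫ s in (0 : ℝ)..t, a s) := by
  set F : ℝ → ℝ := fun t => ∫ s in (0 : ℝ)..t, a s
  have hF : ∀ t, HasDerivAt F (a t) t := fun t =>
    (ha.integral_hasStrictDerivAt 0 t).hasDerivAt
  have hconst : ∀ t, HasDerivAt (fun τ => f τ * Real.exp (-F τ)) 0 t := fun t => by
    simpa [mul_comm, mul_assoc] using (hf t).fun_mul (hF t).neg.exp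
  have := is_const_of_deriv_eq_zero (fun x => (hconst x).differentiableAt)
    (fun x => (hconst x).deriv) t 0
  simp only [F, intervalIntegral.integral_same, neg_zero, Real.exp_zero, mul_one] at this
  rw [← this, mul_assoc, ← Real.exp_add, neg_add_cancel, Real.exp_zero, mul_one]

theorem liouville_formula_general
    (n : ℕ)
    (J : ℝ → Matrix (Fin n) (Fin n) ℝ) (hJ : Continuous J)
    (v : ℝ → Matrix (Fin n) (Fin n) ℝ)
    (hv0 : v 0 = 1)
    (hv : ∀ (t : ℝ) (i j : Fin n),
      HasDerivAt (fun τ => v τ i j) ((J t * v t) i j) t) :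
    ∀ t : ℝ, (v t).det = Real.exp (∫ s in (0:ℝ)..t, (J s).trace) := by
  have hdet : ∀ t, HasDerivAt (fun τ => (v τ).det) ((J t).trace * (v t).det) t := fun t => by
    simpa only [Matrix.sum_det_updateRow_mul] using Matrix.hasDerivAt_det (hv t)
  intro t
  rw [eq_mul_exp_integral_of_hasDerivAt hJ.matrix_trace hdet t, hv0, Matrix.det_one, one_mul]

/-- Liouville's formula (Abel–Jacobi–Liouville): for the fundamental solution of
the linear matrix ODE `v′(t) = J(t) v(t)` with `v(0) = I`, the determinant
satisfies `det v(t) = exp (∫₀ᵗ trace J(s) ds)`. -/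
theorem liouville_formula
    (n : ℕ) (hn : 1 ≤ n)
    (J : ℝ → Matrix (Fin n) (Fin n) ℝ) (hJ : Continuous J)
    (v : ℝ → Matrix (Fin n) (Fin n) ℝ)
    (hv0 : v 0 = 1)
    (hv : ∀ (t : ℝ) (i j : Fin n),
      HasDerivAt (fun τ => v τ i j) ((J t * v t) i j) t) :
    ∀ t : ℝ, (v t).det = Real.exp (∫ s in (0:ℝ)..t, (J s).trace) :=
  liouville_formula_general n J hJ v hv0 hv
end

section
/- Let n ≥ 1 and let K : ℝ → Matrix (Fin n) (Fin n) ℝ be differentiable with K(t)ᵀ = −K(t) and K(0) = 0, and define Q(t) = (1 − K(t)) * (1 + K(t))⁻¹. Then Q is differentiable and for all t, Q(t)ᵀ * Q′(t) = −2 * ((1 − K(t))⁻¹ * K′(t) * (1 + K(t))⁻¹). -/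
/-!
Skewness gives `v ⬝ᵥ (1 + K) v = v ⬝ᵥ v`, so `1 + K` is invertible, and transposing yields
`Qᵀ = (1 - K)⁻¹ (1 + K)`. The product rule together with `(A⁻¹)' = -A⁻¹ A' A⁻¹` gives
`Q' = -(1 + K)⁻¹ K' (1 + K)⁻¹ - (1 - K)(1 + K)⁻¹ K' (1 + K)⁻¹ = -2 (1 + K)⁻¹ K' (1 + K)⁻¹`,
because `(1 + K) + (1 - K) = 2`; multiplying by `Qᵀ` cancels `1 + K`.
-/

open Matrix Filter Topology

attribute [local instance] Matrix.normedAddCommGroup Matrix.normedSpace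

theorem Matrix.isUnit_det_one_add_of_transpose_eq_neg {n R : Type*} [Fintype n] [DecidableEq n]
    [Field R] [LinearOrder R] [IsStrictOrderedRing R] {K : Matrix n n R} (hK : Kᵀ = -K) :
    IsUnit (1 + K).det := by
  rw [isUnit_iff_ne_zero, Ne, ← exists_mulVec_eq_zero_iff]
  rintro ⟨v, hv, hKv⟩
  have hquad : v ⬝ᵥ K *ᵥ v = 0 := by
    have h : v ⬝ᵥ K *ᵥ v = -(v ⬝ᵥ K *ᵥ v) := by
      conv_lhs => rw [dotProduct_mulVec, ← mulVec_transpose, hK, neg_mulVec, neg_dotProduct,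
        dotProduct_comm]
    linarith
  have hself : v ⬝ᵥ v = 0 := by
    simpa [add_mulVec, dotProduct_add, hquad] using congrArg (v ⬝ᵥ ·) hKv
  exact hv (dotProduct_self_eq_zero.mp hself)

theorem Matrix.transpose_cayley {n R : Type*} [Fintype n] [DecidableEq n] [CommRing R]
    {K : Matrix n n R} (hK : Kᵀ = -K) : ((1 - K) * (1 + K)⁻¹)ᵀ = (1 - K)⁻¹ * (1 + K) := by
  rw [transpose_mul, transpose_nonsing_inv, transpose_add, transpose_sub, transpose_one, hK,
    sub_neg_eq_add, ← sub_eq_add_neg]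

section Calculus

variable {𝕜 : Type*} [NontriviallyNormedField 𝕜] {l m n : Type*} {t : 𝕜}

theorem Matrix.hasDerivAt_iff [Fintype n] {A : 𝕜 → Matrix m n 𝕜} {A' : Matrix m n 𝕜} :
    HasDerivAt A A' t ↔ ∀ i j, HasDerivAt (fun τ => A τ i j) (A' i j) t :=
  hasDerivAt_pi.trans (forall_congr' fun _ => hasDerivAt_pi)

theorem Matrix.differentiableAt_iff [Fintype n] {A : 𝕜 → Matrix m n 𝕜} :
    DifferentiableAt 𝕜 A t ↔ ∀ i j, DifferentiableAt 𝕜 (fun τ => A τ i j) t :=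
  differentiableAt_pi.trans (forall_congr' fun _ => differentiableAt_pi)

theorem HasDerivAt.matrix_mul [Fintype m] [Fintype n] {A : 𝕜 → Matrix l m 𝕜}
    {B : 𝕜 → Matrix m n 𝕜} {A' : Matrix l m 𝕜} {B' : Matrix m n 𝕜} (hA : HasDerivAt A A' t)
    (hB : HasDerivAt B B' t) : HasDerivAt (fun τ => A τ * B τ) (A' * B t + A t * B') t := by
  rw [Matrix.hasDerivAt_iff] at *
  intro i j
  simp only [mul_apply, Matrix.add_apply, ← Finset.sum_add_distrib]
  exact HasDerivAt.fun_sum fun k _ => (hA i k).mul (hB k j)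

variable [Fintype n] [DecidableEq n]

theorem DifferentiableAt.matrix_det {A : 𝕜 → Matrix n n 𝕜} (hA : DifferentiableAt 𝕜 A t) :
    DifferentiableAt 𝕜 (fun τ => (A τ).det) t := by
  rw [Matrix.differentiableAt_iff] at hA
  simp only [det_apply']
  exact DifferentiableAt.fun_sum fun σ _ =>
    (differentiableAt_const _).mul (DifferentiableAt.fun_finsetProd fun i _ => hA (σ i) i)

theorem DifferentiableAt.matrix_adjugate {A : 𝕜 → Matrix n n 𝕜} (hA : DifferentiableAt 𝕜 A t) :
    DifferentiableAt 𝕜 (fun τ => (A τ).adjugate) t := by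
  rw [Matrix.differentiableAt_iff] at hA ⊢
  intro i j
  simp only [adjugate_apply]
  refine DifferentiableAt.matrix_det (Matrix.differentiableAt_iff.2 fun a b => ?_)
  by_cases h : a = j
  · simp only [updateRow_apply, h, if_true, differentiableAt_const]
  · simp only [updateRow_apply, h, if_false, hA a b]

theorem DifferentiableAt.matrix_inv {A : 𝕜 → Matrix n n 𝕜} (hA : DifferentiableAt 𝕜 A t)
    (ht : IsUnit (A t).det) : DifferentiableAt 𝕜 (fun τ => (A τ)⁻¹) t := by
  simp only [inv_def, Ring.inverse_eq_inv']
  exact (hA.matrix_det.inv ht.ne_zero).smul hA.matrix_adjugate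

theorem HasDerivAt.matrix_inv {A : 𝕜 → Matrix n n 𝕜} {A' : Matrix n n 𝕜} (hA : HasDerivAt A A' t)
    (ht : IsUnit (A t).det) : HasDerivAt (fun τ => (A τ)⁻¹) (-((A t)⁻¹ * A' * (A t)⁻¹)) t := by
  obtain ⟨N', hN⟩ : ∃ N', HasDerivAt (fun τ => (A τ)⁻¹) N' t :=
    ⟨_, (hA.differentiableAt.matrix_inv ht).hasDerivAt⟩
  have hone : (fun τ => A τ * (A τ)⁻¹) =ᶠ[𝓝 t] fun _ => 1 := by
    filter_upwards [hA.differentiableAt.matrix_det.continuousAt.eventually_ne ht.ne_zero]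
      with τ hτ using mul_nonsing_inv _ (isUnit_iff_ne_zero.2 hτ)
  have hsum : A' * (A t)⁻¹ + A t * N' = 0 :=
    (hA.matrix_mul hN).unique ((hasDerivAt_const t 1).congr_of_eventuallyEq hone)
  convert hN using 1
  rw [← nonsing_inv_mul_cancel_left (A t) N' ht, eq_neg_of_add_eq_zero_right hsum]
  simp [Matrix.mul_assoc]

theorem HasDerivAt.matrix_cayley {K : 𝕜 → Matrix n n 𝕜} {K' : Matrix n n 𝕜}
    (hK : HasDerivAt K K' t) (ht : IsUnit (1 + K t).det) :
    HasDerivAt (fun τ => (1 - K τ) * (1 + K τ)⁻¹)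
      ((-2 : 𝕜) • ((1 + K t)⁻¹ * K' * (1 + K t)⁻¹)) t := by
  convert (hK.const_sub 1).matrix_mul ((hK.const_add 1).matrix_inv ht) using 1
  set A := 1 + K t
  have hK' : -K' * A⁻¹ = -(A * (A⁻¹ * K' * A⁻¹)) := by
    rw [← Matrix.mul_assoc, ← Matrix.mul_assoc, mul_nonsing_inv _ ht, Matrix.one_mul,
      Matrix.neg_mul]
  rw [hK', Matrix.mul_neg, ← neg_add, ← Matrix.add_mul, show A + (1 - K t) = (2 : 𝕜) • 1 by module,
    Matrix.smul_mul, Matrix.one_mul, neg_smul]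

end Calculus

theorem cayley_transform_derivative_general
    (n : ℕ)
    (K K' : ℝ → Matrix (Fin n) (Fin n) ℝ)
    (hK' : ∀ (t : ℝ) (i j : Fin n), HasDerivAt (fun τ => K τ i j) (K' t i j) t)
    (hskew : ∀ t : ℝ, (K t)ᵀ = -(K t))
    (Q : ℝ → Matrix (Fin n) (Fin n) ℝ)
    (hQ : ∀ t : ℝ, Q t = (1 - K t) * (1 + K t)⁻¹) :
    (∀ (t : ℝ) (i j : Fin n), DifferentiableAt ℝ (fun τ => Q τ i j) t) ∧
      ∀ t : ℝ,
        (Q t)ᵀ * (Matrix.of fun i j => deriv (fun τ => Q τ i j) t)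
          = (-2 : ℝ) • ((1 - K t)⁻¹ * K' t * (1 + K t)⁻¹) := by
  have hdet (t : ℝ) : IsUnit (1 + K t).det := isUnit_det_one_add_of_transpose_eq_neg (hskew t)
  have hQ' (t : ℝ) (i j : Fin n) :
      HasDerivAt (fun τ => Q τ i j) (((-2 : ℝ) • ((1 + K t)⁻¹ * K' t * (1 + K t)⁻¹)) i j) t := by
    rw [funext hQ]
    exact Matrix.hasDerivAt_iff.1 ((Matrix.hasDerivAt_iff.2 (hK' t)).matrix_cayley (hdet t)) i j
  refine ⟨fun t i j => (hQ' t i j).differentiableAt, fun t => ?_⟩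
  have hderiv : (Matrix.of fun i j => deriv (fun τ => Q τ i j) t)
      = (-2 : ℝ) • ((1 + K t)⁻¹ * K' t * (1 + K t)⁻¹) := ext fun i j => (hQ' t i j).deriv
  rw [hderiv, hQ, transpose_cayley (hskew t), Matrix.mul_smul]
  simp only [Matrix.mul_assoc, mul_nonsing_inv_cancel_left _ _ (hdet t)]

/-- For a differentiable family of skew-symmetric matrices `K(t)` with `K(0) = 0`,
the Cayley transform `Q(t) = (1 − K(t))(1 + K(t))⁻¹` is differentiable and
satisfies `Q(t)ᵀ Q′(t) = −2 (1 − K(t))⁻¹ K′(t) (1 + K(t))⁻¹`. -/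
theorem cayley_transform_derivative
    (n : ℕ) (hn : 1 ≤ n)
    (K K' : ℝ → Matrix (Fin n) (Fin n) ℝ)
    (hK' : ∀ (t : ℝ) (i j : Fin n), HasDerivAt (fun τ => K τ i j) (K' t i j) t)
    (hskew : ∀ t : ℝ, (K t)ᵀ = -(K t))
    (hK0 : K 0 = 0)
    (Q : ℝ → Matrix (Fin n) (Fin n) ℝ)
    (hQ : ∀ t : ℝ, Q t = (1 - K t) * (1 + K t)⁻¹) :
    (∀ (t : ℝ) (i j : Fin n), DifferentiableAt ℝ (fun τ => Q τ i j) t) ∧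
      ∀ t : ℝ,
        (Q t)ᵀ * (Matrix.of fun i j => deriv (fun τ => Q τ i j) t)
          = (-2 : ℝ) • ((1 - K t)⁻¹ * K' t * (1 + K t)⁻¹) :=
  cayley_transform_derivative_general n K K' hK' hskew Q hQ
end

section
/- Let n ≥ 1, let J : ℝ → Matrix (Fin n) (Fin n) ℝ be continuous, and fix t₀ ∈ ℝ. Let v : ℝ → Matrix (Fin n) (Fin n) ℝ be differentiable with v′(t) = J(t) * v(t) for all t, and suppose v(t₀) = Q₀ * R₀ where Q₀ is orthogonal (Q₀ᵀ * Q₀ = 1) and R₀ is invertible. Let w : ℝ → Matrix (Fin n) (Fin n) ℝ be differentiable with w(0) = 1 and w′(τ) = (Q₀ᵀ * J(t₀ + τ) * Q₀) * w(τ) for all τ. Then for all τ ≥ 0, v(t₀ + τ) = Q₀ * w(τ) * R₀. -/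
/-!
Both `τ ↦ v (t₀ + τ)` and `τ ↦ Q₀ w(τ) R₀` solve the linear equation `X′ = J(t₀ + τ) X`: for the
second, `Q₀ (Q₀ᵀ J Q₀ w) R₀ = J (Q₀ w R₀)` because `Q₀ Q₀ᵀ = 1`. They agree at `τ = 0` since
`w 0 = 1`, and a linear ODE with continuous coefficients is Lipschitz in the state on every compact
time interval, so its solutions are unique.
-/

open Matrix Set

section LinearODE

variable {E : Type*} [NormedAddCommGroup E] [NormedSpace ℝ E]

theorem ODE_linear_solution_unique_of_mem_Icc_right {A : ℝ → E →L[ℝ] E} {f g : ℝ → E}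
    {a b : ℝ} (hA : ContinuousOn A (Icc a b))
    (hf : ContinuousOn f (Icc a b))
    (hf' : ∀ t ∈ Ico a b, HasDerivWithinAt f (A t (f t)) (Ici t) t)
    (hg : ContinuousOn g (Icc a b))
    (hg' : ∀ t ∈ Ico a b, HasDerivWithinAt g (A t (g t)) (Ici t) t)
    (ha : f a = g a) :
    EqOn f g (Icc a b) := by
  obtain ⟨K, hK⟩ := isCompact_Icc.exists_bound_of_continuousOn hA
  have hlip : ∀ t ∈ Ico a b, LipschitzOnWith K.toNNReal (A t) univ := fun t ht =>
    have hAK : ‖A t‖₊ ≤ K.toNNReal :=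
      norm_toNNReal.ge.trans (Real.toNNReal_le_toNNReal (hK t (Ico_subset_Icc_self ht)))
    ((A t).lipschitz.weaken hAK).lipschitzOnWith
  exact ODE_solution_unique_of_mem_Icc_right hlip hf hf' (fun _ _ => mem_univ _) hg hg'
    (fun _ _ => mem_univ _) ha

end LinearODE

attribute [local instance] Matrix.normedAddCommGroup Matrix.normedSpace

namespace Matrix

variable {l m n o : Type*}

theorem hasDerivAt_iff_s16 [Fintype n] {f : ℝ → Matrix m n ℝ} {f' : Matrix m n ℝ} {t : ℝ} :
    HasDerivAt f f' t ↔ ∀ i j, HasDerivAt (fun s => f s i j) (f' i j) t :=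
  hasDerivAt_pi.trans (forall_congr' fun _ => hasDerivAt_pi)

variable [Fintype l] [Fintype m] [Fintype n] [Fintype o]

theorem _root_.HasDerivAt.const_matrix_mul_mul_const {w : ℝ → Matrix m n ℝ} {w' : Matrix m n ℝ}
    {t : ℝ} (h : HasDerivAt w w' t) (P : Matrix l m ℝ) (R : Matrix n o ℝ) :
    HasDerivAt (fun s => P * w s * R) (P * w' * R) t :=
  (LinearMap.toContinuousLinearMap
    (mulRightLinearMap l ℝ R ∘ₗ mulLeftLinearMap n ℝ P)).hasFDerivAt.comp_hasDerivAt t h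

theorem ODE_linear_solution_unique {A : ℝ → Matrix m m ℝ} {f g : ℝ → Matrix m n ℝ}
    {a b : ℝ} (hA : ContinuousOn A (Icc a b))
    (hf : ∀ t, HasDerivAt f (A t * f t) t) (hg : ∀ t, HasDerivAt g (A t * g t) t)
    (ha : f a = g a) :
    EqOn f g (Icc a b) :=
  ODE_linear_solution_unique_of_mem_Icc_right
    (A := fun t => LinearMap.toContinuousLinearMap (mulLeftLinearMap n ℝ (A t)))
    (continuousOn_clm_apply.2 fun _ =>
      (continuous_id.matrix_mul continuous_const).comp_continuousOn hA)
    (HasDerivAt.continuousOn fun t _ => hf t) (fun t _ => (hf t).hasDerivWithinAt)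
    (HasDerivAt.continuousOn fun t _ => hg t) (fun t _ => (hg t).hasDerivWithinAt) ha

end Matrix

theorem qr_restarting_lemma_general
    (n : ℕ)
    (J : ℝ → Matrix (Fin n) (Fin n) ℝ) (hJ : Continuous J)
    (t₀ : ℝ)
    (v : ℝ → Matrix (Fin n) (Fin n) ℝ)
    (hv : ∀ (t : ℝ) (i j : Fin n),
      HasDerivAt (fun τ => v τ i j) ((J t * v t) i j) t)
    (Q₀ R₀ : Matrix (Fin n) (Fin n) ℝ)
    (hdecomp : v t₀ = Q₀ * R₀)
    (horth : Q₀ᵀ * Q₀ = 1)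
    (w : ℝ → Matrix (Fin n) (Fin n) ℝ)
    (hw0 : w 0 = 1)
    (hw : ∀ (τ : ℝ) (i j : Fin n),
      HasDerivAt (fun σ => w σ i j) (((Q₀ᵀ * J (t₀ + τ) * Q₀) * w τ) i j) τ) :
    ∀ τ : ℝ, 0 ≤ τ → v (t₀ + τ) = Q₀ * w τ * R₀ := by
  intro τ hτ
  have hQ : Q₀ * Q₀ᵀ = 1 := mul_eq_one_comm.mp horth
  have hv' : ∀ s, HasDerivAt (fun s => v (t₀ + s)) (J (t₀ + s) * v (t₀ + s)) s := fun s =>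
    (Matrix.hasDerivAt_iff_s16.2 (hv (t₀ + s))).comp_const_add t₀ s
  have hw' : ∀ s, HasDerivAt (fun s => Q₀ * w s * R₀) (J (t₀ + s) * (Q₀ * w s * R₀)) s := by
    intro s
    convert (Matrix.hasDerivAt_iff_s16.2 (hw s)).const_matrix_mul_mul_const Q₀ R₀ using 1
    simp only [← mul_assoc, hQ, one_mul]
  exact Matrix.ODE_linear_solution_unique (hJ.comp (continuous_const_add t₀)).continuousOn
    hv' hw' (by simp [hdecomp, hw0]) ⟨hτ, le_rfl⟩

/-- Restarting lemma for the QR/Cayley method: if `v` solves `v′ = J(t) v` and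
`v(t₀) = Q₀ R₀` with `Q₀` orthogonal and `R₀` invertible, and `w` solves the
transformed variational equation `w′(τ) = (Q₀ᵀ J(t₀ + τ) Q₀) w(τ)` with
`w(0) = 1`, then `v(t₀ + τ) = Q₀ w(τ) R₀` for all `τ ≥ 0`. -/
theorem qr_restarting_lemma
    (n : ℕ) (hn : 1 ≤ n)
    (J : ℝ → Matrix (Fin n) (Fin n) ℝ) (hJ : Continuous J)
    (t₀ : ℝ)
    (v : ℝ → Matrix (Fin n) (Fin n) ℝ)
    (hv : ∀ (t : ℝ) (i j : Fin n),
      HasDerivAt (fun τ => v τ i j) ((J t * v t) i j) t)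
    (Q₀ R₀ : Matrix (Fin n) (Fin n) ℝ)
    (hdecomp : v t₀ = Q₀ * R₀)
    (horth : Q₀ᵀ * Q₀ = 1)
    (hR₀ : IsUnit R₀)
    (w : ℝ → Matrix (Fin n) (Fin n) ℝ)
    (hw0 : w 0 = 1)
    (hw : ∀ (τ : ℝ) (i j : Fin n),
      HasDerivAt (fun σ => w σ i j) (((Q₀ᵀ * J (t₀ + τ) * Q₀) * w τ) i j) τ) :
    ∀ τ : ℝ, 0 ≤ τ → v (t₀ + τ) = Q₀ * w τ * R₀ :=
  qr_restarting_lemma_general n J hJ t₀ v hv Q₀ R₀ hdecomp horth w hw0 hw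
end
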